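/- arXiv:1803.00354 — 3 statements merged into one kernel-verified Lean document; each statement's English description precedes it below -/
import Mathlib

section
/- Define a sequence of functions g_n : [0,\infty) \to [0,\infty) by g_0(x) = 1 and g_{n+1}(x) = \int_0^x g_n(y) dy + \int_x^\infty e^{x-y} g_n(y) dy. Then g_n(x) = \sum_{k=0}^n c_{k,n} x^k / k!, where c_{k,n} = ((k+1)/(n+1)) binomial(2n-k,n) are the Catalan triangle numbers. -/
/-!
Write `g n x = ∑ₖ a k * x ^ k / k!`. Integrating `y ^ k / k!` over `[0, x]` gives the next monomial
`x ^ (k + 1) / (k + 1)!`, and `∫_x^∞ e^{x-y} y ^ k / k! dy = ∑_{j ≤ k} x ^ j / j!` because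
`-e^{x-y} ∑_{j ≤ k} y ^ j / j!` is an antiderivative. Collecting coefficients, the coefficient of
`x ^ j / j!` in `g (n + 1)` is `∑_{l = j - 1}^{n} a l`, which is the defining recurrence of the
Catalan triangle; the latter follows from the hockey-stick identity once the numbers are written as
the ballot differences `C(2n-k, n) - C(2n-k, n+1)`.
-/

open Finset Real MeasureTheory
open scoped Nat

namespace CatalanExpansion

/-- The number `c_{k,n}`; junk for `k > n`, where `2 * n - k` truncates. -/
noncomputable def catalanTriangle (k n : ℕ) : ℝ :=
  ((k : ℝ) + 1) / ((n : ℝ) + 1) * ((2 * n - k).choose n : ℝ)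

theorem catalanTriangle_eq_choose_sub_choose {k n : ℕ} (hk : k ≤ n) :
    catalanTriangle k n = (2 * n - k).choose n - (2 * n - k).choose (n + 1) := by
  have key : ((2 * n - k).choose (n + 1) : ℝ) * (n + 1) = (2 * n - k).choose n * (n - k) := by
    have := Nat.choose_succ_right_eq (2 * n - k) n
    rw [show 2 * n - k - n = n - k by omega] at this
    exact_mod_cast this
  rw [catalanTriangle, div_mul_eq_mul_div, div_eq_iff (by positivity)]
  linear_combination key

theorem catalanTriangle_zero_succ (n : ℕ) :
    catalanTriangle 0 (n + 1) = catalanTriangle 1 (n + 1) := by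
  have pascal : (2 * (n + 1)).choose (n + 1) = 2 * (2 * n + 1).choose n := by
    rw [show 2 * (n + 1) = 2 * n + 1 + 1 by ring, Nat.choose_succ_succ', Nat.choose_symm_half]
    ring
  simp only [catalanTriangle, Nat.sub_zero, pascal,
    show 2 * (n + 1) - 1 = 2 * n + 1 by omega, Nat.choose_symm_half]
  push_cast
  ring

theorem sum_Icc_choose_two_mul_sub {a n r : ℕ} (ha : a ≤ n) (hr : n ≤ r) :
    ∑ l ∈ Icc a n, (2 * n - l).choose r = (2 * n - a + 1).choose (r + 1) := by
  have reflect : ∑ l ∈ Icc a n, (2 * n - l).choose r = ∑ m ∈ Icc n (2 * n - a), m.choose r := by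
    have h := sum_Ico_reflect (fun m => m.choose r) a (show n + 1 ≤ 2 * n + 1 by omega)
    rw [show 2 * n + 1 - (n + 1) = n by omega, show 2 * n + 1 - a = 2 * n - a + 1 by omega] at h
    rwa [← Ico_add_one_right_eq_Icc, ← Ico_add_one_right_eq_Icc]
  have drop_zeros : ∑ m ∈ Icc n (2 * n - a), m.choose r = ∑ m ∈ Icc r (2 * n - a), m.choose r := by
    refine (sum_subset (Icc_subset_Icc_left hr) fun m hm hm' => ?_).symm
    simp only [mem_Icc] at hm hm'
    exact Nat.choose_eq_zero_of_lt (by omega)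
  rw [reflect, drop_zeros, Nat.sum_Icc_choose]

theorem sum_Icc_catalanTriangle {a n : ℕ} (ha : a ≤ n) :
    ∑ l ∈ Icc a n, catalanTriangle l n = catalanTriangle (a + 1) (n + 1) := by
  rw [sum_congr rfl fun l hl => catalanTriangle_eq_choose_sub_choose (mem_Icc.mp hl).2,
    sum_sub_distrib, catalanTriangle_eq_choose_sub_choose (by omega),
    show 2 * (n + 1) - (a + 1) = 2 * n - a + 1 by omega, ← Nat.cast_sum, ← Nat.cast_sum,
    sum_Icc_choose_two_mul_sub ha le_rfl, sum_Icc_choose_two_mul_sub ha n.le_succ]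

/-- The paper's recurrence. At `j = 0` the truncated `j - 1` is `0`, which is harmless
because `c_{-1,n} = 0`. -/
theorem catalanTriangle_succ {j n : ℕ} (hj : j ≤ n + 1) :
    catalanTriangle j (n + 1) = ∑ l ∈ Icc (j - 1) n, catalanTriangle l n := by
  rcases j with _ | j
  · rw [catalanTriangle_zero_succ, sum_Icc_catalanTriangle n.zero_le]
  · rw [Nat.add_sub_cancel, sum_Icc_catalanTriangle (by omega)]

theorem sum_mul_shift_add_partialSums {R : Type*} [CommSemiring R] (a u : ℕ → R) (n : ℕ) :
    ∑ k ∈ range (n + 1), a k * (u (k + 1) + ∑ j ∈ range (k + 1), u j) =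
      ∑ j ∈ range (n + 2), (∑ l ∈ Icc (j - 1) n, a l) * u j := by
  induction n with
  | zero =>
    simp only [zero_add, range_one, sum_range_succ, sum_singleton, range_zero, sum_empty,
      zero_tsub, Icc_self]
    ring
  | succ n ih =>
    have extend : ∀ j ∈ range (n + 2),
        (∑ l ∈ Icc (j - 1) (n + 1), a l) * u j =
          (∑ l ∈ Icc (j - 1) n, a l) * u j + a (n + 1) * u j :=
      fun j hj => by rw [sum_Icc_succ_top (by simp only [mem_range] at hj; omega), add_mul]
    rw [sum_range_succ, ih, sum_range_succ _ (n + 2), sum_congr rfl extend, sum_add_distrib,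
      ← mul_sum, show n + 2 - 1 = n + 1 by omega, Icc_self, sum_singleton]
    ring

theorem hasDerivAt_sum_range_pow_div_factorial (k : ℕ) (y : ℝ) :
    HasDerivAt (fun y : ℝ => ∑ j ∈ range (k + 1), y ^ j / j !)
      (∑ j ∈ range k, y ^ j / j !) y := by
  induction k with
  | zero => simpa using hasDerivAt_const y (1 : ℝ)
  | succ k ih =>
    simp only [sum_range_succ _ (k + 1)]
    refine (ih.add ((hasDerivAt_pow (k + 1) y).div_const ((k + 1) ! : ℝ))).congr_deriv ?_
    rw [sum_range_succ, Nat.factorial_succ, Nat.cast_mul, Nat.add_sub_cancel,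
      mul_div_mul_left _ _ (by positivity)]

theorem integral_pow_div_factorial (k : ℕ) (x : ℝ) :
    ∫ y in (0 : ℝ)..x, y ^ k / k ! = x ^ (k + 1) / (k + 1) ! := by
  rw [intervalIntegral.integral_div, integral_pow, Nat.factorial_succ, Nat.cast_mul, div_div]
  simp

section IntegralIoi

variable (k : ℕ) (x : ℝ)

theorem hasDerivAt_neg_exp_sub_mul_sum_range (y : ℝ) :
    HasDerivAt (fun y => -(exp (x - y) * ∑ j ∈ range (k + 1), y ^ j / j !))
      (exp (x - y) * (y ^ k / k !)) y := by
  have hexp : HasDerivAt (fun y => exp (x - y)) (-exp (x - y)) y := by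
    simpa using ((hasDerivAt_id y).const_sub x).exp
  refine (hexp.mul (hasDerivAt_sum_range_pow_div_factorial k y)).neg.congr_deriv ?_
  rw [sum_range_succ]
  ring

theorem tendsto_neg_exp_sub_mul_sum_range :
    Filter.Tendsto (fun y => -(exp (x - y) * ∑ j ∈ range (k + 1), y ^ j / j !))
      Filter.atTop (nhds 0) := by
  have hsum : Filter.Tendsto (fun y : ℝ => exp x * ∑ j ∈ range (k + 1), y ^ j * exp (-y) / j !)
      Filter.atTop (nhds 0) := by
    simpa using (tendsto_finsetSum (range (k + 1)) fun j _ =>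
      (tendsto_pow_mul_exp_neg_atTop_nhds_zero j).div_const (j ! : ℝ)).const_mul (exp x)
  refine neg_zero (G := ℝ) ▸ (hsum.congr fun y => ?_).neg
  rw [exp_sub, exp_neg, mul_sum, mul_sum]
  exact sum_congr rfl fun j _ => by ring

variable {x}

theorem integral_Ioi_exp_sub_mul_pow_div_factorial (hx : 0 ≤ x) :
    IntegrableOn (fun y => exp (x - y) * (y ^ k / k !)) (Set.Ioi x) ∧
      ∫ y in Set.Ioi x, exp (x - y) * (y ^ k / k !) = ∑ j ∈ range (k + 1), x ^ j / j ! := by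
  have hnonneg : ∀ y ∈ Set.Ioi x, 0 ≤ exp (x - y) * (y ^ k / k !) := fun y hy => by
    have : 0 ≤ y := hx.trans (le_of_lt hy)
    positivity
  have hderiv := fun y (_ : y ∈ Set.Ici x) => hasDerivAt_neg_exp_sub_mul_sum_range k x y
  refine ⟨integrableOn_Ioi_deriv_of_nonneg' hderiv hnonneg (tendsto_neg_exp_sub_mul_sum_range k x),
    ?_⟩
  rw [integral_Ioi_of_hasDerivAt_of_nonneg' hderiv hnonneg (tendsto_neg_exp_sub_mul_sum_range k x)]
  simp

end IntegralIoi

theorem integral_add_integral_Ioi_exp_sub_mul {f : ℝ → ℝ} {a : ℕ → ℝ} {n : ℕ}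
    (hf : ∀ y, 0 ≤ y → f y = ∑ k ∈ range (n + 1), a k * y ^ k / k !) {x : ℝ} (hx : 0 ≤ x) :
    (∫ y in (0 : ℝ)..x, f y) + ∫ y in Set.Ioi x, exp (x - y) * f y =
      ∑ k ∈ range (n + 1), a k * (x ^ (k + 1) / (k + 1) ! + ∑ j ∈ range (k + 1), x ^ j / j !) := by
  have hf' : ∀ y, 0 ≤ y → f y = ∑ k ∈ range (n + 1), a k * (y ^ k / k !) := fun y hy => by
    simp only [hf y hy, mul_div_assoc]
  have interval :
      ∫ y in (0 : ℝ)..x, f y = ∑ k ∈ range (n + 1), a k * (x ^ (k + 1) / (k + 1) !) := by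
    rw [intervalIntegral.integral_congr fun y hy => hf' y (Set.uIcc_of_le hx ▸ hy).1,
      intervalIntegral.integral_finsetSum fun k _ =>
        (by fun_prop : Continuous _).intervalIntegrable _ _]
    simp only [intervalIntegral.integral_const_mul, integral_pow_div_factorial]
  have tail : ∫ y in Set.Ioi x, exp (x - y) * f y =
      ∑ k ∈ range (n + 1), a k * ∑ j ∈ range (k + 1), x ^ j / j ! := by
    have hIoi := fun k => integral_Ioi_exp_sub_mul_pow_div_factorial k hx
    have expand : ∀ y ∈ Set.Ioi x, exp (x - y) * f y =
        ∑ k ∈ range (n + 1), a k * (exp (x - y) * (y ^ k / k !)) := fun y hy => by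
      rw [hf' y (hx.trans (le_of_lt hy)), mul_sum]
      exact sum_congr rfl fun k _ => mul_left_comm _ _ _
    rw [setIntegral_congr_fun measurableSet_Ioi expand,
      integral_finsetSum _ fun k _ => (hIoi k).1.const_mul (a k)]
    simp only [integral_const_mul, (hIoi _).2]
  rw [interval, tail, ← sum_add_distrib]
  simp only [mul_add]

end CatalanExpansion

open CatalanExpansion in
/-- If `g 0 ≡ 1` and `g (n+1) x = ∫_0^x g n + ∫_x^∞ e^{x-y} g n y dy` on `[0,∞)`,
then `g n x = ∑_{k=0}^n c_{k,n} x^k / k!`, where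
`c_{k,n} = ((k+1)/(n+1)) * choose (2n-k) n` are the Catalan triangle numbers. -/
theorem g_eq_catalan_expansion
    (g : ℕ → ℝ → ℝ)
    (hg0 : ∀ x : ℝ, 0 ≤ x → g 0 x = 1)
    (hgrec : ∀ (n : ℕ) (x : ℝ), 0 ≤ x →
      g (n + 1) x = (∫ y in (0:ℝ)..x, g n y) + ∫ y in Set.Ioi x, Real.exp (x - y) * g n y) :
    ∀ (n : ℕ) (x : ℝ), 0 ≤ x →
      g n x = ∑ k ∈ Finset.range (n + 1),
        (((k : ℝ) + 1) / ((n : ℝ) + 1)) * (Nat.choose (2 * n - k) n : ℝ) * x ^ k /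
          (Nat.factorial k : ℝ) := by
  suffices h : ∀ (n : ℕ) (x : ℝ), 0 ≤ x →
      g n x = ∑ k ∈ range (n + 1), catalanTriangle k n * x ^ k / k ! from h
  intro n
  induction n with
  | zero => intro x hx; simp [hg0 x hx, catalanTriangle]
  | succ n ih =>
    intro x hx
    rw [hgrec n x hx, integral_add_integral_Ioi_exp_sub_mul ih hx,
      sum_mul_shift_add_partialSums _ fun j => x ^ j / j !]
    refine sum_congr rfl fun j hj => ?_
    rw [← catalanTriangle_succ (Nat.lt_succ_iff.mp (mem_range.mp hj)), mul_div_assoc]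
end

section
/- Let g(x) = (x+2)e^{x/2} and let T be the integral operator T(h)(x) = \int_0^x h(y) dy + \int_x^\infty e^{x-y} h(y) dy. Then T(g) = 4g, i.e., g is an eigenfunction of T with eigenvalue 4. -/
/-!
Both integrands are of the form `(y + b) e^{c y}`, with antiderivative
`(y + b - 1/c) e^{c y} / c`. For `c = 1/2` this gives `∫_0^x g = 2x e^{x/2}`; after pulling out
`e^x`, the tail integral has `c = -1/2`, the antiderivative vanishes at infinity, and it equals
`2(x + 4) e^{x/2}`. The sum is `4(x + 2) e^{x/2}`.
-/

open Real Filter Set Topology Asymptotics MeasureTheory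

noncomputable def linExpAntideriv (b c y : ℝ) : ℝ := (y + b - c⁻¹) * exp (c * y) / c

lemma hasDerivAt_linExpAntideriv (b : ℝ) {c : ℝ} (hc : c ≠ 0) (y : ℝ) :
    HasDerivAt (linExpAntideriv b c) ((y + b) * exp (c * y)) y := by
  have h := ((((hasDerivAt_id' y).add_const b).sub_const c⁻¹).fun_mul
    ((hasDerivAt_id' y).const_mul c).exp).div_const c
  refine h.congr_deriv ?_
  field_simp
  ring

lemma tendsto_linear_mul_exp_atTop_nhds_zero (b : ℝ) {c : ℝ} (hc : c < 0) :
    Tendsto (fun y => (y + b) * exp (c * y)) atTop (𝓝 0) := by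
  have hlin : Tendsto (fun y : ℝ => y ^ (1 : ℝ) * exp (-(-c) * y)) atTop (𝓝 0) :=
    tendsto_rpow_mul_exp_neg_mul_atTop_nhds_zero 1 (-c) (neg_pos.2 hc)
  have hexp : Tendsto (fun y => exp (c * y)) atTop (𝓝 0) :=
    tendsto_exp_atBot.comp (tendsto_id.const_mul_atTop_of_neg hc)
  simpa [add_mul] using hlin.add (hexp.const_mul b)

lemma integrableOn_Ioi_linear_mul_exp (a b : ℝ) {c : ℝ} (hc : c < 0) :
    IntegrableOn (fun y => (y + b) * exp (c * y)) (Ioi a) := by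
  refine integrable_of_isBigO_exp_neg (b := -c / 2) (by linarith) (by fun_prop) ?_
  have hbdd : (fun y => (y + b) * exp (c / 2 * y)) =O[atTop] (fun _ => (1 : ℝ)) :=
    (tendsto_linear_mul_exp_atTop_nhds_zero b (by linarith)).isBigO_one ℝ
  refine (hbdd.mul (isBigO_refl (fun y => exp (-(-c / 2) * y)) atTop)).congr' ?_ ?_
  · filter_upwards with y
    rw [mul_assoc, ← exp_add]
    ring_nf
  · filter_upwards with y
    rw [one_mul]

lemma integral_linear_mul_exp (a₁ a₂ b : ℝ) {c : ℝ} (hc : c ≠ 0) :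
    ∫ y in a₁..a₂, (y + b) * exp (c * y) = linExpAntideriv b c a₂ - linExpAntideriv b c a₁ :=
  intervalIntegral.integral_eq_sub_of_hasDerivAt
    (fun y _ => hasDerivAt_linExpAntideriv b hc y)
    ((by fun_prop : Continuous _).intervalIntegrable _ _)

lemma integral_Ioi_linear_mul_exp (a b : ℝ) {c : ℝ} (hc : c < 0) :
    ∫ y in Ioi a, (y + b) * exp (c * y) = -linExpAntideriv b c a := by
  have hlim : Tendsto (linExpAntideriv b c) atTop (𝓝 0) := by
    have h := (tendsto_linear_mul_exp_atTop_nhds_zero (b - c⁻¹) hc).div_const c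
    rw [zero_div] at h
    refine h.congr fun y => ?_
    rw [linExpAntideriv, add_sub_assoc]
  rw [integral_Ioi_of_hasDerivAt_of_tendsto' (fun y _ => hasDerivAt_linExpAntideriv b hc.ne y)
    (integrableOn_Ioi_linear_mul_exp a b hc) hlim, zero_sub]

theorem eigenfunction_of_T_general (x : ℝ) :
    (∫ y in (0:ℝ)..x, (y + 2) * Real.exp (y / 2)) +
      (∫ y in Set.Ioi x, Real.exp (x - y) * ((y + 2) * Real.exp (y / 2))) =
      4 * ((x + 2) * Real.exp (x / 2)) := by
  have hgrowth : ∀ y : ℝ, exp (y / 2) = exp (2⁻¹ * y) := fun y => by ring_nf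
  have hdecay : ∀ y : ℝ, exp (x - y) * ((y + 2) * exp (y / 2)) =
      exp x * ((y + 2) * exp (-2⁻¹ * y)) := fun y => by
    rw [mul_left_comm, ← exp_add, mul_left_comm, ← exp_add]
    ring_nf
  simp_rw [hdecay, hgrowth]
  rw [integral_linear_mul_exp 0 x 2 (by norm_num), integral_const_mul,
    integral_Ioi_linear_mul_exp x 2 (by norm_num)]
  have hexp : exp x * exp (-2⁻¹ * x) = exp (2⁻¹ * x) := by
    rw [← exp_add]
    ring_nf
  simp only [linExpAntideriv, mul_zero, exp_zero]
  linear_combination (2 * (x + 4)) * hexp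

/-- The function `g x = (x+2) e^{x/2}` is an eigenfunction with eigenvalue `4` of the
integral operator `T h x = ∫_0^x h(y) dy + ∫_x^∞ e^{x-y} h(y) dy`. -/
theorem eigenfunction_of_T (x : ℝ) (hx : 0 ≤ x) :
    (∫ y in (0:ℝ)..x, (y + 2) * Real.exp (y / 2)) +
      (∫ y in Set.Ioi x, Real.exp (x - y) * ((y + 2) * Real.exp (y / 2))) =
      4 * ((x + 2) * Real.exp (x / 2)) :=
  eigenfunction_of_T_general x
end

section
/- For u > 1/4, F_{n+1}(R) = u^{n+1} \int_0^R g_n(x) dx \ge u^{n+1} 4^n R / (2(n+1)^2), and hence F_n(R) \to \infty as n \to \infty, for every fixed R > 0. -/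
open MeasureTheory Filter Finset

/-!
The constant term of `g_n` is the Catalan number `c_{0,n} = C(2n,n)/(n+1)`, and all other terms
are nonnegative on `[0, R]`, so `∫₀ᴿ g_n ≥ catalan n * R`. Since `catalan n ≥ 4^n / (2(n+1)²)`,
`F (n+1) R` is at least a constant times `(4u)^(n+1) / (n+1)²`, which diverges when `4u > 1`.
-/

/-- The paper's `g_n`. -/
noncomputable def catalanTrianglePoly (n : ℕ) (x : ℝ) : ℝ :=
  ∑ k ∈ range (n + 1),
    (((k : ℝ) + 1) / ((n : ℝ) + 1)) * (Nat.choose (2 * n - k) n : ℝ) * x ^ k / (Nat.factorial k : ℝ)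

theorem four_pow_div_le_catalan (n : ℕ) : (4 : ℝ) ^ n / (2 * ((n : ℝ) + 1) ^ 2) ≤ catalan n := by
  have hcentral : 4 ^ n ≤ 2 * (n + 1) * n.centralBinom :=
    (Nat.four_pow_le_two_mul_add_one_mul_central_binom n).trans (Nat.mul_le_mul_right _ (by omega))
  have hcast : (4 : ℝ) ^ n ≤ 2 * ((n : ℝ) + 1) * ((n + 1) * catalan n) := by
    exact_mod_cast (succ_mul_catalan_eq_centralBinom n).symm ▸ hcentral
  rw [div_le_iff₀ (by positivity)]
  linarith

theorem intervalIntegral.integral_le_integral_sum {ι : Type*} {f : ι → ℝ → ℝ} {s : Finset ι}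
    {i : ι} (hi : i ∈ s) {a b : ℝ} (hab : a ≤ b)
    (hf : ∀ k ∈ s, IntervalIntegrable (f k) volume a b)
    (hf_nonneg : ∀ k ∈ s, ∀ x ∈ Set.Icc a b, 0 ≤ f k x) :
    ∫ x in a..b, f i x ≤ ∫ x in a..b, ∑ k ∈ s, f k x := by
  rw [intervalIntegral.integral_finsetSum hf]
  exact single_le_sum (fun k hk => intervalIntegral.integral_nonneg hab
    (hf_nonneg k hk)) hi

theorem catalan_mul_le_integral_catalanTrianglePoly (n : ℕ) {R : ℝ} (hR : 0 ≤ R) :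
    catalan n * R ≤ ∫ x in (0 : ℝ)..R, catalanTrianglePoly n x := by
  let term (k : ℕ) (x : ℝ) : ℝ :=
    (((k : ℝ) + 1) / ((n : ℝ) + 1)) * (Nat.choose (2 * n - k) n : ℝ) * x ^ k / (Nat.factorial k : ℝ)
  have hterm_zero : term 0 = fun _ => (catalan n : ℝ) := by
    have hcat : ((n : ℝ) + 1) * catalan n = Nat.choose (2 * n) n := by
      exact_mod_cast succ_mul_catalan_eq_centralBinom n
    ext x
    simp only [term, Nat.cast_zero, zero_add, Nat.sub_zero, pow_zero, Nat.factorial_zero,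
      Nat.cast_one, div_one, mul_one, ← hcat]
    field_simp
  calc (catalan n : ℝ) * R = ∫ x in (0 : ℝ)..R, term 0 x := by simp [hterm_zero, mul_comm]
    _ ≤ ∫ x in (0 : ℝ)..R, ∑ k ∈ range (n + 1), term k x :=
      intervalIntegral.integral_le_integral_sum (mem_range.2 n.succ_pos) hR
        (fun k _ => Continuous.intervalIntegrable (by fun_prop) _ _)
        fun k _ x hx => by have := hx.1; positivity

theorem tendsto_const_pow_div_pow_atTop (k : ℕ) {r : ℝ} (hr : 1 < r) :
    Tendsto (fun n : ℕ => r ^ n / (n : ℝ) ^ k) atTop atTop := by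
  have hpos : ∀ᶠ n : ℕ in atTop, 0 < (n : ℝ) ^ k / r ^ n :=
    eventually_atTop.2 ⟨1, fun n hn => by
      have : (0 : ℝ) < n := by exact_mod_cast hn
      positivity⟩
  have := (tendsto_nhdsWithin_of_tendsto_nhds_of_eventually_within _
    (tendsto_pow_const_div_const_pow_of_one_lt k hr) hpos).inv_tendsto_nhdsGT_zero
  simpa only [Pi.inv_def, inv_div] using this

/-- For `u > 1/4`, if `F (n+1) R = u^{n+1} ∫_0^R g n x dx` where
`g n x = ∑_{k=0}^n c_{k,n} x^k / k!` is the Catalan triangle expansion, then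
`F (n+1) R ≥ u^{n+1} 4^n R / (2(n+1)²)`, and hence `F n R → ∞` as `n → ∞`,
for every fixed `R > 0`. -/
theorem F_tendsto_atTop (u : ℝ) (hu : 1 / 4 < u) (F : ℕ → ℝ → ℝ)
    (hF : ∀ (n : ℕ) (r : ℝ), 0 ≤ r →
      F (n + 1) r = u ^ (n + 1) * ∫ x in (0:ℝ)..r,
        ∑ k ∈ Finset.range (n + 1),
          (((k : ℝ) + 1) / ((n : ℝ) + 1)) * (Nat.choose (2 * n - k) n : ℝ) * x ^ k /
            (Nat.factorial k : ℝ))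
    (R : ℝ) (hR : 0 < R) :
    (∀ n : ℕ, u ^ (n + 1) * 4 ^ n * R / (2 * ((n : ℝ) + 1) ^ 2) ≤ F (n + 1) R) ∧
      Filter.Tendsto (fun n => F n R) Filter.atTop Filter.atTop := by
  have hu0 : 0 < u := by linarith
  have hbound (n : ℕ) : u ^ (n + 1) * 4 ^ n * R / (2 * ((n : ℝ) + 1) ^ 2) ≤ F (n + 1) R :=
    calc u ^ (n + 1) * 4 ^ n * R / (2 * ((n : ℝ) + 1) ^ 2)
        = u ^ (n + 1) * ((4 ^ n / (2 * ((n : ℝ) + 1) ^ 2)) * R) := by ring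
      _ ≤ u ^ (n + 1) * (catalan n * R) := by gcongr; exact four_pow_div_le_catalan n
      _ ≤ u ^ (n + 1) * ∫ x in (0 : ℝ)..R, catalanTrianglePoly n x := by
          gcongr; exact catalan_mul_le_integral_catalanTrianglePoly n hR.le
      _ = F (n + 1) R := (hF n R hR.le).symm
  refine ⟨hbound, (tendsto_add_atTop_iff_nat 1).1 (tendsto_atTop_mono hbound ?_)⟩
  have hdiv := ((tendsto_const_pow_div_pow_atTop 2 (by linarith : 1 < 4 * u)).comp
    (tendsto_add_atTop_nat 1)).const_mul_atTop (by positivity : 0 < R / 8)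
  refine hdiv.congr fun n => ?_
  simp only [Function.comp_apply, Nat.cast_add, Nat.cast_one, mul_pow]
  field_simp
  ring
end
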